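/- arXiv:1212.4416 — 2 statements merged into one kernel-verified Lean document; each statement's English description precedes it below -/
import Mathlib

section
/- If g is continuous on [0,1] and f is defined by f(x) = g(x) + 2∫₀ˣ e^{2(x-y)} g(y) dy, then f satisfies the integral equation f(x) - 2∫₀ˣ f(y) dy = g(x) for all x ∈ [0,1]. -/
/-!
Write `H x = ∫₀ˣ e^{2(x-y)} g(y) dy`, so that `f = g + 2H`. Pulling `e^{2x}` out of the integral
shows `H' = g + 2H` and `H 0 = 0`; hence `∫₀ˣ f = ∫₀ˣ H' = H x`, and `f - 2∫₀ˣ f = g`.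
Extending `g` continuously beyond `[0,1]` lets the calculus be done on all of `ℝ`.
-/

open Set intervalIntegral Real

noncomputable def expConvolution (c a : ℝ) (G : ℝ → ℝ) (x : ℝ) : ℝ :=
  ∫ y in a..x, exp (c * (x - y)) * G y

namespace expConvolution

variable {G : ℝ → ℝ} (c a : ℝ)

theorem eq_exp_mul_integral (x : ℝ) :
    expConvolution c a G x = exp (c * x) * ∫ y in a..x, exp (-(c * y)) * G y := by
  rw [expConvolution, ← integral_const_mul]
  refine integral_congr fun y _ => ?_
  rw [← mul_assoc, ← exp_add, mul_sub, sub_eq_add_neg]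

@[simp]
theorem self_eq_zero : expConvolution c a G a = 0 := by
  simp [expConvolution]

theorem hasDerivAt (hG : Continuous G) (x : ℝ) :
    HasDerivAt (expConvolution c a G) (G x + c * expConvolution c a G x) x := by
  have hI := ((by fun_prop : Continuous fun y => exp (-(c * y)) * G y).integral_hasStrictDerivAt
    a x).hasDerivAt
  have hE : HasDerivAt (fun x => exp (c * x)) (exp (c * x) * c) x := by
    simpa using ((hasDerivAt_id x).const_mul c).exp
  refine ((hE.mul hI).congr_deriv ?_).congr_of_eventuallyEq
    (.of_forall (eq_exp_mul_integral c a))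
  rw [eq_exp_mul_integral, ← mul_assoc, ← exp_add, add_neg_cancel, exp_zero]
  ring

theorem integral_add_const_mul (hG : Continuous G) (x : ℝ) :
    ∫ y in a..x, (G y + c * expConvolution c a G y) = expConvolution c a G x := by
  have hH : Continuous (expConvolution c a G) :=
    continuous_iff_continuousAt.2 fun y => (hasDerivAt c a hG y).continuousAt
  rw [integral_eq_sub_of_hasDerivAt (fun y _ => hasDerivAt c a hG y)
    ((hG.add (continuous_const.mul hH)).intervalIntegrable a x), self_eq_zero, sub_zero]

end expConvolution

theorem stmt1 (g f : ℝ → ℝ) (hg : ContinuousOn g (Icc 0 1))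
    (hf : ∀ x ∈ Icc (0:ℝ) 1,
      f x = g x + 2 * ∫ y in (0:ℝ)..x, Real.exp (2 * (x - y)) * g y) :
    ∀ x ∈ Icc (0:ℝ) 1, f x - 2 * ∫ y in (0:ℝ)..x, f y = g x := by
  set G := IccExtend zero_le_one ((Icc (0:ℝ) 1).domRestrict g)
  have hG : Continuous G := hg.domRestrict.Icc_extend'
  have hGg : EqOn G g (Icc 0 1) := fun y hy => IccExtend_of_mem _ _ hy
  have hfG : ∀ y ∈ Icc (0:ℝ) 1, f y = G y + 2 * expConvolution 2 0 G y := fun y hy => by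
    rw [hf y hy, hGg hy, expConvolution]
    congr 2
    refine integral_congr fun t ht => ?_
    rw [hGg (uIcc_subset_Icc (left_mem_Icc.2 zero_le_one) hy ht)]
  intro x hx
  rw [integral_congr fun y hy => hfG y (uIcc_subset_Icc (left_mem_Icc.2 zero_le_one) hx hy),
    expConvolution.integral_add_const_mul 2 0 hG, hfG x hx, add_sub_cancel_right, hGg hx]
end

section
/- The sesquilinear form a(f,g) = ∫₀¹ f'(x)g'(x) dx + (𝒜 (f(0),f(1))ᵀ, (g(0),g(1))ᵀ) on H¹(0,1), with 𝒜 = [[−1,1],[1,−1]], satisfies: there exist ω ≥ 0 and α > 0 such that a(f,f) + ω‖f‖²_{L²} ≥ α‖f‖²_{H¹} for all f ∈ H¹(0,1). -/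
/-!
The boundary term equals `-(f 1 - f 0)²`, so it suffices to bound `(f 1 - f 0)²` by
`½ ‖f'‖² + C ‖f‖²`. Pick `x₀ ∈ [0, 1/12]` and `x₁ ∈ [11/12, 1]` where `f²` lies below its mean on
these intervals, so that `f x₀², f x₁² ≤ 12 ‖f‖²`, and split
`f 1 - f 0 = (f 1 - f x₁) + (f x₁ - f x₀) + (f x₀ - f 0)`: by Cauchy–Schwarz the two outer
increments have squares at most `‖f'‖² / 12`, and `(p + q + r)² ≤ 3 (p² + q² + r²)` gives
`(f 1 - f 0)² ≤ ½ ‖f'‖² + 144 ‖f‖²`.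
-/

open Set intervalIntegral MeasureTheory

lemma sq_intervalIntegral_le {a b : ℝ} (hab : a ≤ b) {g : ℝ → ℝ}
    (hg : IntervalIntegrable g volume a b)
    (hg2 : IntervalIntegrable (fun x => g x ^ 2) volume a b) :
    (∫ x in a..b, g x) ^ 2 ≤ (b - a) * ∫ x in a..b, g x ^ 2 := by
  rcases hab.eq_or_lt with rfl | hlt
  · simp
  set I := ∫ x in a..b, g x
  set J := ∫ x in a..b, g x ^ 2
  set m := I / (b - a)
  have hm : m * (b - a) = I := div_mul_cancel₀ _ (sub_pos.2 hlt).ne'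
  -- the variance of `g` around its mean `m` is nonnegative
  have hvar : ∫ x in a..b, (g x - m) ^ 2 = J - 2 * m * I + (b - a) * m ^ 2 := by
    have hexpand : (fun x => (g x - m) ^ 2) = fun x => (g x ^ 2 - 2 * m * g x) + m ^ 2 := by
      funext x; ring
    rw [hexpand, integral_add (hg2.sub (hg.const_mul _)) intervalIntegrable_const,
      integral_sub hg2 (hg.const_mul _), intervalIntegral.integral_const_mul, intervalIntegral.integral_const, smul_eq_mul]
  have hnonneg : 0 ≤ ∫ x in a..b, (g x - m) ^ 2 := integral_nonneg hab (fun x _ => sq_nonneg _)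
  rw [hvar] at hnonneg
  nlinarith [mul_nonneg (sub_pos.2 hlt).le hnonneg]

lemma exists_mem_Icc_mul_le_intervalIntegral {a b : ℝ} (hab : a < b) {h : ℝ → ℝ}
    (hc : ContinuousOn h (Icc a b)) :
    ∃ x ∈ Icc a b, (b - a) * h x ≤ ∫ t in a..b, h t := by
  obtain ⟨x, hx, hmin⟩ := isCompact_Icc.exists_isMinOn (nonempty_Icc.2 hab.le) hc
  refine ⟨x, hx, ?_⟩
  have hint : IntervalIntegrable h volume a b :=
    (hc.mono (uIcc_of_le hab.le).subset).intervalIntegrable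
  calc (b - a) * h x = ∫ _ in a..b, h x := by rw [intervalIntegral.integral_const, smul_eq_mul]
    _ ≤ ∫ t in a..b, h t := integral_mono_on hab.le intervalIntegrable_const hint hmin

lemma exists_mem_Icc_mul_sq_le_intervalIntegral {a b c d : ℝ} (hca : c ≤ a) (hab : a < b)
    (hbd : b ≤ d) {f : ℝ → ℝ} (hf : ContinuousOn f (Icc c d)) :
    ∃ x ∈ Icc a b, (b - a) * f x ^ 2 ≤ ∫ t in c..d, f t ^ 2 := by
  obtain ⟨x, hx, hle⟩ := exists_mem_Icc_mul_le_intervalIntegral hab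
    ((hf.mono (Icc_subset_Icc hca hbd)).pow 2)
  have hint : IntervalIntegrable (fun t => f t ^ 2) volume c d :=
    ((hf.pow 2).mono (uIcc_of_le (hca.trans (hab.le.trans hbd))).subset).intervalIntegrable
  exact ⟨x, hx, hle.trans <| integral_mono_interval hca hab.le hbd
    (Filter.Eventually.of_forall fun t => sq_nonneg (f t)) hint⟩

section Primitive

variable {f f' : ℝ → ℝ} {a b : ℝ}

lemma continuousOn_of_eq_add_primitive (hab : a ≤ b) (hf' : IntervalIntegrable f' volume a b)
    (hrep : ∀ x ∈ Icc a b, f x = f a + ∫ t in a..x, f' t) : ContinuousOn f (Icc a b) := by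
  have hprim := continuousOn_primitive_interval' hf' (left_mem_uIcc (a := a) (b := b))
  rw [uIcc_of_le hab] at hprim
  exact (continuousOn_const.add hprim).congr hrep

lemma sub_eq_intervalIntegral_of_eq_add_primitive (hf' : IntervalIntegrable f' volume a b)
    (hrep : ∀ x ∈ Icc a b, f x = f a + ∫ t in a..x, f' t) {x y : ℝ}
    (hx : x ∈ Icc a b) (hy : y ∈ Icc a b) : f y - f x = ∫ t in x..y, f' t := by
  have hint {z : ℝ} (hz : z ∈ Icc a b) : IntervalIntegrable f' volume a z :=
    hf'.mono_set (uIcc_subset_uIcc_left (Icc_subset_uIcc hz))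
  rw [hrep y hy, hrep x hx, add_sub_add_left_eq_sub, integral_interval_sub_left (hint hy) (hint hx)]

lemma sq_sub_le_of_eq_add_primitive (hf' : IntervalIntegrable f' volume a b)
    (hf'2 : IntervalIntegrable (fun t => f' t ^ 2) volume a b)
    (hrep : ∀ x ∈ Icc a b, f x = f a + ∫ t in a..x, f' t) {x y : ℝ}
    (hx : x ∈ Icc a b) (hy : y ∈ Icc a b) (hxy : x ≤ y) :
    (f y - f x) ^ 2 ≤ (y - x) * ∫ t in a..b, f' t ^ 2 := by
  have hsub : uIcc x y ⊆ uIcc a b := by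
    rw [uIcc_of_le hxy, uIcc_of_le (hx.1.trans hx.2)]
    exact Icc_subset_Icc hx.1 hy.2
  rw [sub_eq_intervalIntegral_of_eq_add_primitive hf' hrep hx hy]
  exact (sq_intervalIntegral_le hxy (hf'.mono_set hsub) (hf'2.mono_set hsub)).trans <|
    mul_le_mul_of_nonneg_left (integral_mono_interval hx.1 hxy hy.2
      (Filter.Eventually.of_forall fun t => sq_nonneg (f' t)) hf'2) (sub_nonneg.2 hxy)

end Primitive

lemma sq_sub_endpoints_le {f f' : ℝ → ℝ} (hf' : IntervalIntegrable f' volume 0 1)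
    (hf'2 : IntervalIntegrable (fun x => f' x ^ 2) volume 0 1)
    (hrep : ∀ x ∈ Icc (0:ℝ) 1, f x = f 0 + ∫ t in (0:ℝ)..x, f' t) :
    (f 1 - f 0) ^ 2 ≤ 1 / 2 * (∫ x in (0:ℝ)..1, f' x ^ 2) + 144 * ∫ x in (0:ℝ)..1, f x ^ 2 := by
  have hfc := continuousOn_of_eq_add_primitive zero_le_one hf' hrep
  obtain ⟨x₀, ⟨hx₀, hx₀'⟩, hfx₀⟩ :=
    exists_mem_Icc_mul_sq_le_intervalIntegral le_rfl (by norm_num : (0:ℝ) < 1 / 12)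
      (by norm_num) hfc
  obtain ⟨x₁, ⟨hx₁, hx₁'⟩, hfx₁⟩ :=
    exists_mem_Icc_mul_sq_le_intervalIntegral (by norm_num) (by norm_num : (11 / 12 : ℝ) < 1)
      le_rfl hfc
  have hleft := sq_sub_le_of_eq_add_primitive hf' hf'2 hrep
    (left_mem_Icc.2 zero_le_one) ⟨hx₀, by linarith⟩ hx₀
  have hright := sq_sub_le_of_eq_add_primitive hf' hf'2 hrep
    ⟨by linarith, hx₁'⟩ (right_mem_Icc.2 zero_le_one) hx₁'
  have hI1 : 0 ≤ ∫ x in (0:ℝ)..1, f' x ^ 2 := integral_nonneg zero_le_one fun x _ => sq_nonneg _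
  have hsplit : f 1 - f 0 = (f 1 - f x₁) + (f x₁ - f x₀) + (f x₀ - f 0) := by ring
  rw [hsplit]
  nlinarith [sq_nonneg (f 1 - f x₁ - (f x₁ - f x₀)), sq_nonneg (f 1 - f x₁ - (f x₀ - f 0)),
    sq_nonneg (f x₁ - f x₀ - (f x₀ - f 0)), sq_nonneg (f x₁ + f x₀)]

lemma dotProduct_mulVec_neg_one_one (u v : ℝ) :
    dotProduct ((!![(-1:ℝ), 1; 1, -1]).mulVec ![u, v]) ![u, v] = -(v - u) ^ 2 := by
  simp only [dotProduct, Matrix.mulVec, Fin.sum_univ_two, Matrix.cons_val_zero,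
    Matrix.cons_val_one, Matrix.of_apply, Matrix.cons_val', Matrix.empty_val',
    Matrix.cons_val_fin_one]
  ring

theorem stmt18 :
    ∃ ω : ℝ, 0 ≤ ω ∧ ∃ α : ℝ, 0 < α ∧
      ∀ f f' : ℝ → ℝ,
        IntervalIntegrable f' volume 0 1 →
        IntervalIntegrable (fun x => (f' x) ^ 2) volume 0 1 →
        (∀ x ∈ Icc (0:ℝ) 1, f x = f 0 + ∫ t in (0:ℝ)..x, f' t) →
        (∫ x in (0:ℝ)..1, (f' x) ^ 2)
            + dotProduct ((!![(-1:ℝ), 1; 1, -1]).mulVec ![f 0, f 1]) ![f 0, f 1]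
            + ω * ∫ x in (0:ℝ)..1, (f x) ^ 2
          ≥ α * ((∫ x in (0:ℝ)..1, (f x) ^ 2) + ∫ x in (0:ℝ)..1, (f' x) ^ 2) := by
  refine ⟨145, by norm_num, 1 / 2, by norm_num, fun f f' hf' hf'2 hrep => ?_⟩
  have hI0 : 0 ≤ ∫ x in (0:ℝ)..1, f x ^ 2 := integral_nonneg zero_le_one fun x _ => sq_nonneg _
  rw [dotProduct_mulVec_neg_one_one]
  linarith [sq_sub_endpoints_le hf' hf'2 hrep]
end
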